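/- Let G be a finite connected multigraph, Π a partition of V into connected parts π₁,…,π_{k+1} with quotient simple graph G̃_Π, and f the map from orientations of G̃_Π to divisors of G given by (f(o))_v = Σ over oriented quotient edges (π_i → π_j) with v ∈ π_j of the number of G-edges at v between π_i and π_j. If o₂ is obtained from o₁ by a switch at a critical set A ⊆ V(G̃_Π) where all edges between A and its complement point toward A in o₁, then f(o₂) = f(o₁) - L·χ_{Ā}, where Ā = ⋃_{π∈A} π ⊆ V and L is the Laplacian of G. In particular f(o₁) ∼ f(o₂). -/

import Mathlib

open Finset
open scoped Classical

/-- Laplacian of a loopless multigraph given by edge multiplicities `m`. -/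
def lap {V : Type*} [Fintype V] [DecidableEq V] (m : V → V → ℕ) : Matrix V V ℤ :=
  fun u v => if u = v then (∑ w, (m u w : ℤ)) else -(m u v : ℤ)

/-- The divisor on `G` associated to an orientation `o` of the quotient graph
of the partition with part map `p`. -/
noncomputable def fdiv {V ι : Type*} [Fintype V] [DecidableEq V] [Fintype ι] [DecidableEq ι]
    (m : V → V → ℕ) (p : V → ι) (o : ι → ι → Prop) : V → ℤ :=
  fun v => ∑ i : ι, if o i (p v) then (∑ u ∈ Finset.univ.filter (fun u => p u = i), (m v u : ℤ)) else 0

/-- Adjacency-generating relation of the quotient simple graph. -/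
def qrel {V ι : Type*} (m : V → V → ℕ) (p : V → ι) : ι → ι → Prop :=
  fun i j => ∃ u v, p u = i ∧ p v = j ∧ 0 < m u v

/-!
Write `d v i` for the number of edges from `v` into the part `i`. Then `f(o)_v` sums `d v i` over
the parts `i` whose edge to the part of `v` points towards it, and for `χ` constant on parts,
`(L χ)_v = ∑ i, d v i (χ (part v) - χ i)`. Compare the two sums part by part: the switch at `A`
keeps every edge with both ends on the same side of `A`, and reverses the edges between `A` and
its complement, which all point into `A` in `o₁`; so a vertex `v` on the `A` side loses `d v i`
and a vertex outside `A` gains it, which is the term `d v i (χ i - χ (part v))`.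
-/

section Laplacian

variable {V ι : Type*} [Fintype V]

theorem lap_apply_eq_sub [DecidableEq V] {m : V → V → ℕ} (hloop : ∀ v, m v v = 0) (v u : V) :
    lap m v u = (if v = u then ∑ w, (m v w : ℤ) else 0) - m v u := by
  by_cases h : v = u
  · subst h; simp [lap, hloop]
  · simp [lap, h]

theorem lap_mulVec_apply [DecidableEq V] {m : V → V → ℕ} (hloop : ∀ v, m v v = 0) (x : V → ℤ)
    (v : V) :
    (lap m).mulVec x v = ∑ u, (m v u : ℤ) * (x v - x u) := by
  simp only [Matrix.mulVec, dotProduct, lap_apply_eq_sub hloop, sub_mul, ite_mul, zero_mul,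
    Finset.sum_sub_distrib, Finset.sum_ite_eq, Finset.mem_univ, if_true, mul_sub, Finset.sum_mul]

def partDegree [DecidableEq ι] (m : V → V → ℕ) (p : V → ι) (v : V) (i : ι) : ℤ :=
  ∑ u ∈ univ.filter (fun u => p u = i), (m v u : ℤ)

theorem fdiv_apply [DecidableEq V] [Fintype ι] [DecidableEq ι] (m : V → V → ℕ) (p : V → ι)
    (o : ι → ι → Prop) (v : V) :
    fdiv m p o v = ∑ i, if o i (p v) then partDegree m p v i else 0 :=
  rfl

theorem sum_partDegree_mul [Fintype ι] [DecidableEq ι] (m : V → V → ℕ) (p : V → ι) (v : V)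
    (f : ι → ℤ) :
    ∑ i, partDegree m p v i * f i = ∑ u, (m v u : ℤ) * f (p u) := by
  rw [← Finset.sum_fiberwise univ p]
  refine Finset.sum_congr rfl fun i _ => ?_
  rw [partDegree, Finset.sum_mul]
  exact Finset.sum_congr rfl fun u hu => by rw [(Finset.mem_filter.mp hu).2]

theorem lap_mulVec_comp_apply [DecidableEq V] [Fintype ι] [DecidableEq ι] {m : V → V → ℕ}
    (hloop : ∀ v, m v v = 0) (p : V → ι) (χ : ι → ℤ) (v : V) :
    (lap m).mulVec (fun u => χ (p u)) v = ∑ i, partDegree m p v i * (χ (p v) - χ i) := by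
  rw [lap_mulVec_apply hloop, sum_partDegree_mul]

theorem qrel_of_partDegree_ne_zero [DecidableEq ι] {m : V → V → ℕ} {p : V → ι} {v : V} {i : ι}
    (h : partDegree m p v i ≠ 0) : qrel m p (p v) i := by
  obtain ⟨u, hu, hmu⟩ := Finset.exists_ne_zero_of_sum_ne_zero h
  exact ⟨v, u, rfl, (Finset.mem_filter.mp hu).2, Nat.pos_of_ne_zero (mod_cast hmu)⟩

end Laplacian

theorem switch_ite_eq {ι : Type*} {o₁ o₂ : ι → ι → Prop} {A : Set ι} {i j : ι} {s : ℤ}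
    (hs : s ≠ 0 → i ≠ j → o₁ i j ∨ o₁ j i) (hcrit : ∀ i j, o₁ i j → i ∈ A → j ∈ A)
    (ho₂ : o₂ i j ↔ (((i ∈ A) ↔ (j ∈ A)) ∧ o₁ i j) ∨ (¬((i ∈ A) ↔ (j ∈ A)) ∧ o₁ j i)) :
    (if o₂ i j then s else 0) =
      (if o₁ i j then s else 0) - s * ((if j ∈ A then 1 else 0) - (if i ∈ A then 1 else 0)) := by
  rcases eq_or_ne s 0 with rfl | hs0
  · simp
  by_cases hi : i ∈ A <;> by_cases hj : j ∈ A
  · simp [ho₂, hi, hj]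
  · have h₁ : ¬ o₁ i j := fun h => hj (hcrit i j h hi)
    have h₂ : o₁ j i := (hs hs0 (by rintro rfl; exact hj hi)).resolve_left h₁
    simp [ho₂, hi, hj, h₁, h₂]
  · have h₂ : ¬ o₁ j i := fun h => hi (hcrit j i h hj)
    have h₁ : o₁ i j := (hs hs0 (by rintro rfl; exact hi hj)).resolve_right h₂
    simp [ho₂, hi, hj, h₁, h₂]
  · simp [ho₂, hi, hj]

theorem fdiv_switch {V ι : Type*} [Fintype V] [DecidableEq V] [Fintype ι] [DecidableEq ι]
    {m : V → V → ℕ} (hloop : ∀ v, m v v = 0) {p : V → ι} {o₁ o₂ : ι → ι → Prop}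
    (htotal₁ : ∀ i j, (SimpleGraph.fromRel (qrel m p)).Adj i j → o₁ i j ∨ o₁ j i)
    {A : Set ι} (hcrit : ∀ i j, o₁ i j → i ∈ A → j ∈ A)
    (ho₂ : ∀ i j, o₂ i j ↔
      ((((i ∈ A) ↔ (j ∈ A)) ∧ o₁ i j) ∨ (¬((i ∈ A) ↔ (j ∈ A)) ∧ o₁ j i))) :
    fdiv m p o₂ = fdiv m p o₁ - (lap m).mulVec (fun v => if p v ∈ A then 1 else 0) := by
  funext v
  rw [Pi.sub_apply, lap_mulVec_comp_apply hloop p (fun i => if i ∈ A then 1 else 0), fdiv_apply,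
    fdiv_apply, ← Finset.sum_sub_distrib]
  refine Finset.sum_congr rfl fun i _ => switch_ite_eq (fun hs hne => ?_) hcrit (ho₂ i (p v))
  exact htotal₁ _ _ ⟨hne, Or.inr (qrel_of_partDegree_ne_zero hs)⟩

theorem stmt14_general {V ι : Type*} [Fintype V] [DecidableEq V] [Fintype ι] [DecidableEq ι]
    (m : V → V → ℕ) (hloop : ∀ v, m v v = 0)
    (p : V → ι)
    (o₁ o₂ : ι → ι → Prop)
    (htotal₁ : ∀ i j, (SimpleGraph.fromRel (qrel m p)).Adj i j → o₁ i j ∨ o₁ j i)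
    -- A is critical for o₁ and all crossing edges point toward A
    (A : Set ι)
    (hcrit : ∀ i j, o₁ i j → i ∈ A → j ∈ A)
    -- o₂ is the switch of o₁ at A
    (ho₂ : ∀ i j, o₂ i j ↔
      ((((i ∈ A) ↔ (j ∈ A)) ∧ o₁ i j) ∨ (¬((i ∈ A) ↔ (j ∈ A)) ∧ o₁ j i))) :
    fdiv m p o₂ =
      fdiv m p o₁ - (lap m).mulVec (fun v => if p v ∈ A then 1 else 0) ∧
    (∃ σ : V → ℤ, fdiv m p o₁ - (lap m).mulVec σ = fdiv m p o₂) := by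
  have hswitch := fdiv_switch hloop htotal₁ hcrit ho₂
  exact ⟨hswitch, _, hswitch.symm⟩

theorem stmt14 {V ι : Type*} [Fintype V] [DecidableEq V] [Fintype ι] [DecidableEq ι]
    (m : V → V → ℕ) (hsymm : ∀ u v, m u v = m v u) (hloop : ∀ v, m v v = 0)
    (hconn : (SimpleGraph.fromRel (fun u v => 0 < m u v)).Connected)
    (p : V → ι) (hsurj : Function.Surjective p)
    (hpconn : ∀ i : ι, ((SimpleGraph.fromRel (fun u v => 0 < m u v)).induce {v : V | p v = i}).Connected)
    (o₁ o₂ : ι → ι → Prop)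
    (hsub₁ : ∀ i j, o₁ i j → (SimpleGraph.fromRel (qrel m p)).Adj i j)
    (htotal₁ : ∀ i j, (SimpleGraph.fromRel (qrel m p)).Adj i j → o₁ i j ∨ o₁ j i)
    (hanti₁ : ∀ i j, o₁ i j → ¬ o₁ j i)
    (hacyc₁ : ∀ i, ¬ Relation.TransGen o₁ i i)
    -- A is critical for o₁ and all crossing edges point toward A
    (A : Set ι)
    (hcrit : ∀ i j, o₁ i j → i ∈ A → j ∈ A)
    -- o₂ is the switch of o₁ at A
    (ho₂ : ∀ i j, o₂ i j ↔
      ((((i ∈ A) ↔ (j ∈ A)) ∧ o₁ i j) ∨ (¬((i ∈ A) ↔ (j ∈ A)) ∧ o₁ j i))) :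
    fdiv m p o₂ =
      fdiv m p o₁ - (lap m).mulVec (fun v => if p v ∈ A then 1 else 0) ∧
    (∃ σ : V → ℤ, fdiv m p o₁ - (lap m).mulVec σ = fdiv m p o₂) :=
  stmt14_general m hloop p o₁ o₂ htotal₁ A hcrit ho₂
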